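/- Let N be a nonempty subgroupoid of the free magma M on one generator with minimal generating set G of finite cardinality r = rk(N), and let λ = min{ℓ(x) : x ∈ G}. If r < 4^{λ−1}, then N has null density: lim_{n→∞} |N|_{≤n}/|M|_{≤n} = 0. -/

import Mathlib

/-!
An element of `N = ⟨G⟩` of length at most `n` is the value of a word in the generators of length
at most `m = n / λ`, and such a word is determined by its shape (a binary tree with fewer than `m`
internal nodes: at most `∑_{k<m} C_k ≤ 4 ^ m` choices) and its list of leaves (at most
`(m + 1) r ^ m` choices). So `|N|_{≤n} ≤ (m + 1) (4 r) ^ m`, whereas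
`|M|_{≤n} ≥ C_{n-1} ≥ 4 ^ n / (8 n ^ 2) ≥ (4 ^ λ) ^ m / (8 n ^ 2)`. As `4 r < 4 ^ λ`, the ratio is at
most a polynomial in `m` times `(4 r / 4 ^ λ) ^ m`, which tends to `0`.
-/

open Filter

def FreeMagma.len {α : Type*} : FreeMagma α → ℕ
  | FreeMagma.of _ => 1
  | FreeMagma.mul x y => x.len + y.len

noncomputable def cnt {α : Type*} (X : Set (FreeMagma α)) (n : ℕ) : ℕ :=
  Nat.card {x : FreeMagma α // x ∈ X ∧ x.len = n}

noncomputable def cntLe {α : Type*} (X : Set (FreeMagma α)) (n : ℕ) : ℕ :=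
  Nat.card {x : FreeMagma α // x ∈ X ∧ x.len ≤ n}

open Topology Finset BinaryTree

theorem catalan_le_four_pow (n : ℕ) : catalan n ≤ 4 ^ n :=
  calc catalan n ≤ (n + 1) * catalan n := Nat.le_mul_of_pos_left _ n.succ_pos
    _ = n.centralBinom := succ_mul_catalan_eq_centralBinom n
    _ ≤ 4 ^ n := Nat.centralBinom_le_four_pow n

theorem four_pow_le_two_mul_sq_mul_catalan (n : ℕ) : 4 ^ n ≤ 2 * (n + 1) ^ 2 * catalan n := by
  rcases n.eq_zero_or_pos with rfl | hn
  · simp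
  calc 4 ^ n ≤ 2 * n * n.centralBinom := Nat.four_pow_le_two_mul_self_mul_centralBinom n hn
    _ = 2 * n * ((n + 1) * catalan n) := by rw [succ_mul_catalan_eq_centralBinom]
    _ ≤ 2 * (n + 1) * ((n + 1) * catalan n) := by gcongr; omega
    _ = 2 * (n + 1) ^ 2 * catalan n := by ring

namespace BinaryTree

theorem setOf_numNodes_lt (n : ℕ) :
    {t : BinaryTree Unit | t.numNodes < n} = ↑((range n).biUnion treesOfNumNodesEq) := by
  ext t
  simp

instance finite_numNodes_lt (n : ℕ) : Finite {t : BinaryTree Unit // t.numNodes < n} := by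
  rw [← Set.coe_ofPred, setOf_numNodes_lt]
  infer_instance

theorem card_numNodes_eq (n : ℕ) :
    Nat.card {t : BinaryTree Unit // t.numNodes = n} = catalan n := by
  rw [← treesOfNumNodesEq_card_eq_catalan, ← Nat.card_eq_finsetCard]
  exact Nat.card_congr (Equiv.subtypeEquivRight fun t => mem_treesOfNumNodesEq.symm)

theorem card_numNodes_lt_le (n : ℕ) :
    Nat.card {t : BinaryTree Unit // t.numNodes < n} ≤ 4 ^ n :=
  calc Nat.card {t : BinaryTree Unit // t.numNodes < n}
      = #((range n).biUnion treesOfNumNodesEq) := by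
        rw [← Nat.card_eq_finsetCard, ← Finset.coe_sort_coe, ← setOf_numNodes_lt]
        rfl
    _ ≤ ∑ k ∈ range n, #(treesOfNumNodesEq k) := card_biUnion_le
    _ ≤ ∑ k ∈ range n, 4 ^ k := sum_le_sum fun k _ =>
        (treesOfNumNodesEq_card_eq_catalan k).trans_le (catalan_le_four_pow k)
    _ ≤ 4 ^ n := (Nat.geomSum_lt (by norm_num) fun k hk => mem_range.mp hk).le

def toFreeMagma : BinaryTree Unit → FreeMagma Unit
  | nil => FreeMagma.of ()
  | node _ l r => l.toFreeMagma * r.toFreeMagma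

end BinaryTree

instance List.finite_length_le_subtype {β : Type*} [Finite β] (m : ℕ) :
    Finite {l : List β // l.length ≤ m} :=
  (List.finite_length_le β m).to_subtype

theorem List.card_length_le {β : Type*} [Finite β] [Nonempty β] (m : ℕ) :
    Nat.card {l : List β // l.length ≤ m} ≤ (m + 1) * Nat.card β ^ m := by
  inhabit β
  let pad (l : {l : List β // l.length ≤ m}) : Fin (m + 1) × (Fin m → β) :=
    (⟨l.1.length, Nat.lt_succ_of_le l.2⟩, fun i => l.1.getD i default)
  have hpad : Function.Injective pad := by
    rintro ⟨l, hl⟩ ⟨l', hl'⟩ h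
    simp only [pad, Prod.mk.injEq, Fin.mk.injEq, funext_iff] at h
    refine Subtype.ext (List.ext_getElem h.1 fun i hi hi' => ?_)
    simpa [List.getD_eq_getElem, hi, hi'] using h.2 ⟨i, hi.trans_le hl⟩
  calc Nat.card {l : List β // l.length ≤ m} ≤ Nat.card (Fin (m + 1) × (Fin m → β)) :=
        Nat.card_le_card_of_injective pad hpad
    _ = (m + 1) * Nat.card β ^ m := by simp [Nat.card_prod, Nat.card_fun]

namespace FreeMagma

variable {α : Type*}

theorem len_mul (x y : FreeMagma α) : (x * y).len = x.len + y.len := rfl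

theorem len_pos (x : FreeMagma α) : 0 < x.len := by
  induction x with
  | ih1 => exact Nat.one_pos
  | ih2 x y hx _ => exact Nat.add_pos_left hx _

def toBinaryTree : FreeMagma α → BinaryTree Unit
  | of _ => .nil
  | mul x y => .node () x.toBinaryTree y.toBinaryTree

def leaves : FreeMagma α → List α
  | of a => [a]
  | mul x y => x.leaves ++ y.leaves

theorem numNodes_toBinaryTree (x : FreeMagma α) : x.toBinaryTree.numNodes + 1 = x.len := by
  induction x with
  | ih1 => rfl
  | ih2 x y hx hy =>
    show x.toBinaryTree.numNodes + y.toBinaryTree.numNodes + 1 + 1 = x.len + y.len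
    omega

theorem length_leaves (x : FreeMagma α) : x.leaves.length = x.len := by
  induction x with
  | ih1 => rfl
  | ih2 x y hx hy => simp only [leaves, List.length_append, hx, hy]; rfl

theorem toBinaryTree_leaves_injective :
    Function.Injective fun x : FreeMagma α => (x.toBinaryTree, x.leaves) := by
  intro x
  induction x with
  | ih1 a =>
    rintro (b | ⟨y₁, y₂⟩) h
    · simp only [leaves, Prod.mk.injEq, List.cons.injEq, and_true] at h
      rw [h.2]
    · simp [toBinaryTree] at h
  | ih2 x₁ x₂ ih₁ ih₂ =>
    rintro (b | ⟨y₁, y₂⟩) h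
    · simp [toBinaryTree] at h
    · simp only [toBinaryTree, leaves, Prod.mk.injEq, BinaryTree.node.injEq, true_and] at h
      obtain ⟨⟨ht₁, ht₂⟩, hl⟩ := h
      have hlen : x₁.leaves.length = y₁.leaves.length := by
        rw [length_leaves, length_leaves, ← numNodes_toBinaryTree, ← numNodes_toBinaryTree, ht₁]
      obtain ⟨hl₁, hl₂⟩ := List.append_inj hl hlen
      rw [ih₁ (Prod.ext ht₁ hl₁), ih₂ (Prod.ext ht₂ hl₂)]
      rfl

def equivBinaryTree : FreeMagma Unit ≃ BinaryTree Unit where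
  toFun := toBinaryTree
  invFun := BinaryTree.toFreeMagma
  left_inv x := by
    induction x with
    | ih1 => rfl
    | ih2 x y hx hy => exact congrArg₂ (· * ·) hx hy
  right_inv t := by
    induction t with
    | nil => rfl
    | node _ l r hl hr => exact congrArg₂ (BinaryTree.node ()) hl hr

theorem cntLe_univ_eq_card (n : ℕ) :
    cntLe (Set.univ : Set (FreeMagma Unit)) n =
      Nat.card {t : BinaryTree Unit // t.numNodes < n} :=
  Nat.card_congr <| equivBinaryTree.subtypeEquiv fun x => by
    have := numNodes_toBinaryTree x
    simp only [Set.mem_univ, true_and, equivBinaryTree, Equiv.coe_fn_mk]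
    omega

theorem catalan_le_cntLe_univ (n : ℕ) :
    catalan n ≤ cntLe (Set.univ : Set (FreeMagma Unit)) (n + 1) := by
  rw [cntLe_univ_eq_card, ← card_numNodes_eq]
  exact Nat.card_le_card_of_injective (fun t => ⟨t.1, by omega⟩) fun s t h => by
    simpa [Subtype.ext_iff] using h

theorem four_pow_le_cntLe_univ {n : ℕ} (hn : 0 < n) :
    4 ^ n ≤ 8 * n ^ 2 * cntLe (Set.univ : Set (FreeMagma Unit)) n := by
  obtain ⟨k, rfl⟩ : ∃ k, n = k + 1 := ⟨n - 1, by omega⟩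
  calc 4 ^ (k + 1) = 4 * 4 ^ k := pow_succ' 4 k
    _ ≤ 4 * (2 * (k + 1) ^ 2 * catalan k) := by
        gcongr
        exact four_pow_le_two_mul_sq_mul_catalan k
    _ = 8 * (k + 1) ^ 2 * catalan k := by ring
    _ ≤ 8 * (k + 1) ^ 2 * cntLe Set.univ (k + 1) := by
        gcongr
        exact catalan_le_cntLe_univ k

def shapeAndLeaves (m : ℕ) (w : {w : FreeMagma α // w.len ≤ m}) :
    {t : BinaryTree Unit // t.numNodes < m} × {l : List α // l.length ≤ m} :=
  (⟨w.1.toBinaryTree, by have := numNodes_toBinaryTree w.1; have := w.2; omega⟩,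
    ⟨w.1.leaves, (length_leaves w.1).trans_le w.2⟩)

theorem shapeAndLeaves_injective (m : ℕ) : Function.Injective (shapeAndLeaves (α := α) m) :=
  fun _ _ h => Subtype.ext <| toBinaryTree_leaves_injective <|
    Prod.ext (congrArg (·.1.1) h) (congrArg (·.2.1) h)

instance finite_len_le [Finite α] (m : ℕ) : Finite {w : FreeMagma α // w.len ≤ m} :=
  Finite.of_injective _ (shapeAndLeaves_injective m)

theorem card_len_le [Finite α] [Nonempty α] (m : ℕ) :
    Nat.card {w : FreeMagma α // w.len ≤ m} ≤ 4 ^ m * ((m + 1) * Nat.card α ^ m) :=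
  calc Nat.card {w : FreeMagma α // w.len ≤ m}
      ≤ Nat.card ({t : BinaryTree Unit // t.numNodes < m} × {l : List α // l.length ≤ m}) :=
        Nat.card_le_card_of_injective _ (shapeAndLeaves_injective m)
    _ ≤ 4 ^ m * ((m + 1) * Nat.card α ^ m) := by
        rw [Nat.card_prod]
        exact Nat.mul_le_mul (card_numNodes_lt_le m) (List.card_length_le m)

section Generators

open Subsemigroup

variable (G : Set (FreeMagma α))

theorem exists_lift_eq_of_mem_closure {x : FreeMagma α} (hx : x ∈ closure G) :
    ∃ w : FreeMagma G, lift Subtype.val w = x := by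
  induction hx using closure_induction with
  | mem g hg => exact ⟨of ⟨g, hg⟩, rfl⟩
  | mul x y _ _ hx hy =>
    obtain ⟨u, rfl⟩ := hx
    obtain ⟨v, rfl⟩ := hy
    exact ⟨u * v, map_mul _ u v⟩

theorem mul_len_le_len_lift {lam : ℕ} (hG : ∀ g ∈ G, lam ≤ g.len) (w : FreeMagma G) :
    lam * w.len ≤ (lift Subtype.val w).len := by
  induction w with
  | ih1 g => simpa [len] using hG g.1 g.2
  | ih2 u v hu hv =>
    show lam * (u * v).len ≤ (lift Subtype.val (u * v)).len
    rw [map_mul, len_mul, len_mul, Nat.mul_add]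
    exact Nat.add_le_add hu hv

theorem cntLe_closure_le [Finite G] {lam : ℕ} (hlam : 0 < lam) (hG : ∀ g ∈ G, lam ≤ g.len)
    (n : ℕ) :
    cntLe (closure G : Set (FreeMagma α)) n ≤ Nat.card {w : FreeMagma G // w.len ≤ n / lam} := by
  choose word hword using fun x : {x // x ∈ (closure G : Set (FreeMagma α)) ∧ x.len ≤ n} =>
    exists_lift_eq_of_mem_closure G x.2.1
  have hlen x : (word x).len ≤ n / lam := by
    rw [Nat.le_div_iff_mul_le hlam, mul_comm]
    exact (hword x ▸ mul_len_le_len_lift G hG (word x)).trans x.2.2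
  refine Nat.card_le_card_of_injective (fun x => ⟨word x, hlen x⟩) fun x y h => ?_
  exact Subtype.ext <| (hword x).symm.trans <|
    (congrArg (lift Subtype.val ·.1) h).trans (hword y)

end Generators

end FreeMagma

theorem tendsto_succ_pow_mul_pow_atTop {t : ℝ} (h0 : 0 < t) (h1 : t < 1) (k : ℕ) :
    Tendsto (fun m : ℕ => ((m : ℝ) + 1) ^ k * t ^ m) atTop (𝓝 0) := by
  have := ((tendsto_add_atTop_iff_nat 1).mpr
    (tendsto_pow_const_mul_const_pow_of_lt_one k h0.le h1)).div_const t
  simpa [pow_succ, mul_div_assoc, h0.ne'] using this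

theorem tendsto_div_of_le_of_four_pow_le {a b : ℕ → ℕ} {lam s : ℕ} (hlam : 0 < lam)
    (hs0 : 0 < s) (hs : s < 4 ^ lam) (ha : ∀ n, a n ≤ (n / lam + 1) * s ^ (n / lam))
    (hb : ∀ n, 0 < n → 4 ^ n ≤ 8 * n ^ 2 * b n) :
    Tendsto (fun n => (a n : ℝ) / b n) atTop (𝓝 0) := by
  set t : ℝ := s / 4 ^ lam
  have ht0 : 0 < t := by positivity
  have ht1 : t < 1 := (div_lt_one (by positivity)).2 (by exact_mod_cast hs)
  have hdom := ((tendsto_succ_pow_mul_pow_atTop ht0 ht1 3).const_mul (8 * (lam : ℝ) ^ 2)).comp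
    (Nat.tendsto_div_const_atTop hlam.ne')
  rw [mul_zero] at hdom
  refine squeeze_zero' (Eventually.of_forall fun n => by positivity) ?_ hdom
  filter_upwards [eventually_gt_atTop 0] with n hn
  set m := n / lam
  have hb' : (4 : ℝ) ^ n ≤ 8 * n ^ 2 * b n := by exact_mod_cast hb n hn
  have hbpos : (0 : ℝ) < b n :=
    pos_of_mul_pos_right ((pow_pos (by norm_num) n).trans_le hb') (by positivity)
  have ha' : (a n : ℝ) ≤ (m + 1) * s ^ m := by exact_mod_cast ha n
  have hn' : (n : ℝ) ≤ lam * (m + 1) := by exact_mod_cast (Nat.lt_mul_div_succ n hlam).le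
  have hpow : ((4 : ℝ) ^ lam) ^ m ≤ 4 ^ n := by
    rw [← pow_mul]
    exact pow_le_pow_right₀ (by norm_num) (Nat.mul_div_le n lam)
  rw [Function.comp_apply, div_le_iff₀ hbpos]
  calc (a n : ℝ) ≤ (m + 1) * s ^ m := ha'
    _ = (m + 1) * t ^ m * ((4 : ℝ) ^ lam) ^ m := by
        rw [mul_assoc, ← mul_pow, div_mul_cancel₀ _ (by positivity)]
    _ ≤ (m + 1) * t ^ m * (8 * n ^ 2 * b n) := by gcongr; exact hpow.trans hb'
    _ ≤ (m + 1) * t ^ m * (8 * (lam * (m + 1)) ^ 2 * b n) := by gcongr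
    _ = 8 * lam ^ 2 * ((m + 1) ^ 3 * t ^ m) * b n := by ring

theorem stmt_10_general (N : Subsemigroup (FreeMagma Unit))
    (G : Set (FreeMagma Unit)) (hgen : Subsemigroup.closure G = N)
    (hfin : G.Finite) (lam : ℕ) (hlam : IsLeast (FreeMagma.len '' G) lam)
    (hrk : G.ncard < 4 ^ (lam - 1)) :
    Tendsto (fun n =>
        (cntLe (N : Set (FreeMagma Unit)) n : ℝ) /
          (cntLe (Set.univ : Set (FreeMagma Unit)) n : ℝ))
      atTop (nhds 0) := by
  have := hfin.to_subtype
  obtain ⟨g₀, hg₀, hg₀lam⟩ := hlam.1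
  have : Nonempty G := ⟨⟨g₀, hg₀⟩⟩
  have hG : ∀ g ∈ G, lam ≤ g.len := fun g hg => hlam.2 ⟨g, hg, rfl⟩
  have hlam0 : 0 < lam := hg₀lam ▸ FreeMagma.len_pos g₀
  have hr : 0 < G.ncard := (Set.ncard_pos hfin).2 ⟨g₀, hg₀⟩
  have hs : 4 * G.ncard < 4 ^ lam :=
    calc 4 * G.ncard < 4 * 4 ^ (lam - 1) := by omega
      _ = 4 ^ lam := by rw [← pow_succ', Nat.sub_add_cancel hlam0]
  refine tendsto_div_of_le_of_four_pow_le hlam0 (by omega) hs (fun n => ?_)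
    fun n hn => FreeMagma.four_pow_le_cntLe_univ hn
  subst hgen
  calc cntLe (Subsemigroup.closure G : Set (FreeMagma Unit)) n
      ≤ Nat.card {w : FreeMagma G // w.len ≤ n / lam} :=
        FreeMagma.cntLe_closure_le G hlam0 hG n
    _ ≤ 4 ^ (n / lam) * ((n / lam + 1) * Nat.card G ^ (n / lam)) :=
        FreeMagma.card_len_le _
    _ = (n / lam + 1) * (4 * G.ncard) ^ (n / lam) := by rw [Nat.card_coe_set_eq]; ring

theorem stmt_10 (N : Subsemigroup (FreeMagma Unit))
    (hne : (N : Set (FreeMagma Unit)).Nonempty)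
    (G : Set (FreeMagma Unit)) (hgen : Subsemigroup.closure G = N)
    (hmin : ∀ G' : Set (FreeMagma Unit), Subsemigroup.closure G' = N → G ⊆ G')
    (hfin : G.Finite) (lam : ℕ) (hlam : IsLeast (FreeMagma.len '' G) lam)
    (hrk : G.ncard < 4 ^ (lam - 1)) :
    Tendsto (fun n =>
        (cntLe (N : Set (FreeMagma Unit)) n : ℝ) /
          (cntLe (Set.univ : Set (FreeMagma Unit)) n : ℝ))
      atTop (nhds 0) :=
  stmt_10_general N G hgen hfin lam hlam hrk
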